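/- arXiv:2006.07131 — 2 statements merged into one kernel-verified Lean document; each statement's English description precedes it below -/
import Mathlib

section
/- Let φ, φ₁, φ₂, … be (normalized, right-continuous at 0) generators of Archimedean copulas. If D⁺φ_n(x) → D⁺φ(x) for all x ∈ Cont(D⁺φ), then φ_n(x) → φ(x) for all x ∈ (0,1]. -/
open MeasureTheory Filter Set
open scoped ENNReal

noncomputable section

/-- Right-hand derivative (of a convex function on `[0,1]`) of `f` at `x`, realized as the
infimum of the forward difference quotients with right endpoint in `(x, 1]`. -/
noncomputable def rightD (f : ℝ → ℝ) (x : ℝ) : ℝ :=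
  sInf ((fun y => (f y - f x) / (y - x)) '' Set.Ioc x 1)

/-- `φ : [0,1] → [0,∞]` is a (normalized, right-continuous at `0`) generator of an
Archimedean copula: convex, strictly decreasing, `φ 1 = 0`, finite on `(0,1]`,
right-continuous at `0` and normalized by `φ (1/2) = 1`. -/
structure IsGenerator (φ : ℝ → ℝ≥0∞) : Prop where
  convex : ∀ x ∈ Set.Icc (0:ℝ) 1, ∀ y ∈ Set.Icc (0:ℝ) 1, ∀ t ∈ Set.Icc (0:ℝ) 1,
    φ (t * x + (1 - t) * y) ≤ ENNReal.ofReal t * φ x + ENNReal.ofReal (1 - t) * φ y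
  strict_anti : ∀ x ∈ Set.Icc (0:ℝ) 1, ∀ y ∈ Set.Icc (0:ℝ) 1, x < y → φ y < φ x
  map_one : φ 1 = 0
  finite : ∀ x ∈ Set.Ioc (0:ℝ) 1, φ x < ⊤
  rightCont_zero : Filter.Tendsto φ (nhdsWithin 0 (Set.Ioi 0)) (nhds (φ 0))
  normalized : φ (1/2) = 1

/-- Pseudo-inverse `φ⁻` of a generator: `φ⁻ s = φ⁻¹ s` for `s < φ 0` and `0` for `s ≥ φ 0`. -/
noncomputable def pseudoInv (φ : ℝ → ℝ≥0∞) (s : ℝ≥0∞) : ℝ :=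
  sSup {x | x ∈ Set.Icc (0:ℝ) 1 ∧ s ≤ φ x}

/-- The Archimedean copula generated by `φ`: `C(x,y) = φ⁻(φ x + φ y)`. -/
noncomputable def archCopula (φ : ℝ → ℝ≥0∞) (x y : ℝ) : ℝ :=
  pseudoInv φ (φ x + φ y)

/-- The right-hand derivative `D⁺φ` of a generator. -/
noncomputable def Dplus (φ : ℝ → ℝ≥0∞) (x : ℝ) : ℝ :=
  rightD (fun t => (φ t).toReal) x

/-- The set `Cont(D⁺φ)` of continuity points of `D⁺φ` in `(0,1)`. -/
def ContD (φ : ℝ → ℝ≥0∞) : Set ℝ :=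
  {x | x ∈ Set.Ioo (0:ℝ) 1 ∧ ContinuousAt (Dplus φ) x}

/-- The `t`-level function `f^t(x) = φ⁻(φ t − φ x)` of the Archimedean copula generated
by `φ`. -/
noncomputable def levelFn (φ : ℝ → ℝ≥0∞) (t x : ℝ) : ℝ :=
  pseudoInv φ (φ t - φ x)

/-- The Kendall distribution function `F^Kendall(x) = x − φ(x)/D⁺φ(x)` of the Archimedean
copula generated by `φ`. -/
noncomputable def kendall (φ : ℝ → ℝ≥0∞) (x : ℝ) : ℝ :=
  x - (φ x).toReal / Dplus φ x

/-- The Markov kernel (as conditional distribution function `(x,y) ↦ K_C(x,[0,y])`) of the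
Archimedean copula generated by `φ`. -/
noncomputable def archKernel (φ : ℝ → ℝ≥0∞) (x y : ℝ) : ℝ :=
  if x = 0 ∨ x = 1 then 1
  else if y < levelFn φ 0 x then 0
  else Dplus φ x / Dplus φ (archCopula φ x y)

/-- The metric `D₁` between two copulas, expressed via their conditional distribution
functions `K₁, K₂` (with `Kᵢ x y = K_{Cᵢ}(x,[0,y])`). -/
noncomputable def D1 (K1 K2 : ℝ → ℝ → ℝ) : ℝ :=
  ∫ y in Set.Icc (0:ℝ) 1, ∫ x in Set.Icc (0:ℝ) 1, |K1 x y - K2 x y|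

/-- Conditional distribution function of the independence copula `Π`. -/
def piKernel : ℝ → ℝ → ℝ := fun _ y => y

/-- Dependence measure `ζ₁(C) = 3 D₁(C, Π)`. -/
noncomputable def zeta1 (K : ℝ → ℝ → ℝ) : ℝ := 3 * D1 K piKernel

/-- Dependence measure `r(C) = 6 ∫∫ K_C(x,[0,y])² dλ(x) dλ(y) − 2`. -/
noncomputable def rdep (K : ℝ → ℝ → ℝ) : ℝ :=
  6 * (∫ y in Set.Icc (0:ℝ) 1, ∫ x in Set.Icc (0:ℝ) 1, (K x y) ^ 2) - 2

/-- Weak conditional convergence of a sequence of copulas, in terms of their conditional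
distribution functions: for λ-a.e. `x ∈ [0,1]` the measures `K_{C_n}(x,·)` converge weakly
to `K_C(x,·)`, i.e. the conditional distribution functions converge at every continuity
point of `y ↦ K_C(x,[0,y])` in `[0,1]`. -/
def WeakCondConv (Kseq : ℕ → ℝ → ℝ → ℝ) (K : ℝ → ℝ → ℝ) : Prop :=
  ∀ᵐ x ∂(volume.restrict (Set.Icc (0:ℝ) 1)),
    ∀ y ∈ Set.Icc (0:ℝ) 1, ContinuousWithinAt (fun t => K x t) (Set.Icc 0 1) y →
      Filter.Tendsto (fun n => Kseq n x y) Filter.atTop (nhds (K x y))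

/-! For `x ∈ (0,1]` a generator satisfies `φ x = -∫_{(x,1]} D⁺φ`, so it suffices to pass to the
limit under the integral. Each `D⁺φ_n` is non-decreasing and nonpositive, hence on `(x,1]` it lies
between `D⁺φ_n u` and `0` for any `u < x`. Since `D⁺φ` is monotone it has only countably many
discontinuities, so `u` can be taken to be a continuity point of `D⁺φ`: then `D⁺φ_n u` converges
and the `D⁺φ_n` are uniformly bounded on `(x,1]`, while `D⁺φ_n → D⁺φ` almost everywhere there.
Dominated convergence finishes the proof. -/

open Topology

lemma rightD_one (f : ℝ → ℝ) : rightD f 1 = 0 := by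
  simp [rightD]

lemma rightD_eq_sInf_slope (f : ℝ → ℝ) {a : ℝ} (ha : 0 ≤ a) :
    rightD f a = sInf (slope f a '' {y | y ∈ Ioc 0 1 ∧ a < y}) := by
  have hset : {y | y ∈ Ioc (0 : ℝ) 1 ∧ a < y} = Ioc a 1 := by
    ext y
    simp only [mem_ofPred_eq, mem_Ioc]
    exact ⟨fun ⟨⟨_, hy1⟩, hay⟩ => ⟨hay, hy1⟩, fun ⟨hay, hy1⟩ => ⟨⟨ha.trans_lt hay, hy1⟩, hay⟩⟩
  simp only [rightD, hset, slope_def_field]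

namespace ConvexOn

variable {f : ℝ → ℝ} {a : ℝ}

lemma hasDerivWithinAt_rightD (hf : ConvexOn ℝ (Ioc 0 1) f) (ha : a ∈ Ioo 0 1) :
    HasDerivWithinAt f (rightD f a) (Ioi a) a := by
  rw [rightD_eq_sInf_slope f ha.1.le]
  exact hf.hasDerivWithinAt_sInf_slope_of_mem_interior (by rwa [interior_Ioc])

lemma rightD_le_slope (hf : ConvexOn ℝ (Ioc 0 1) f) (ha : a ∈ Ioo 0 1) {y : ℝ}
    (hy : y ∈ Ioc a 1) : rightD f a ≤ slope f a y :=
  hf.le_slope_of_hasDerivWithinAt_Ioi (Ioo_subset_Ioc_self ha) ⟨ha.1.trans hy.1, hy.2⟩ hy.1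
    (hf.hasDerivWithinAt_rightD ha)

lemma monotoneOn_rightD_Ioo (hf : ConvexOn ℝ (Ioc 0 1) f) : MonotoneOn (rightD f) (Ioo 0 1) := by
  have hderiv : EqOn (rightD f) (fun x => derivWithin f (Ioi x) x) (Ioo 0 1) := fun x hx =>
    ((hf.hasDerivWithinAt_rightD hx).derivWithin (uniqueDiffWithinAt_Ioi x)).symm
  have := hf.monotoneOn_rightDeriv
  rw [interior_Ioc] at this
  exact this.congr hderiv.symm

lemma rightD_nonpos (hf : ConvexOn ℝ (Ioc 0 1) f) (hfa : AntitoneOn f (Ioc 0 1))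
    (ha : a ∈ Ioc 0 1) : rightD f a ≤ 0 := by
  rcases ha.2.eq_or_lt with rfl | ha1
  · exact (rightD_one f).le
  calc rightD f a ≤ slope f a 1 := hf.rightD_le_slope ⟨ha.1, ha1⟩ ⟨ha1, le_rfl⟩
    _ ≤ 0 := by
      rw [slope_def_field]
      exact div_nonpos_of_nonpos_of_nonneg
        (sub_nonpos.2 (hfa ha ⟨one_pos, le_rfl⟩ ha1.le)) (sub_nonneg.2 ha1.le)

lemma monotoneOn_rightD (hf : ConvexOn ℝ (Ioc 0 1) f) (hfa : AntitoneOn f (Ioc 0 1)) :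
    MonotoneOn (rightD f) (Ioc 0 1) := by
  intro s hs t ht hst
  rcases ht.2.eq_or_lt with rfl | ht1
  · rw [rightD_one]
    exact hf.rightD_nonpos hfa hs
  · exact hf.monotoneOn_rightD_Ioo ⟨hs.1, hst.trans_lt ht1⟩ ⟨ht.1, ht1⟩ hst

lemma abs_rightD_le (hf : ConvexOn ℝ (Ioc 0 1) f) (hfa : AntitoneOn f (Ioc 0 1)) {u t : ℝ}
    (hu : 0 < u) (ht : t ∈ Icc u 1) : |rightD f t| ≤ -rightD f u := by
  have hmono := hf.monotoneOn_rightD hfa ⟨hu, ht.1.trans ht.2⟩ ⟨hu.trans_le ht.1, ht.2⟩ ht.1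
  rw [abs_of_nonpos (hf.rightD_nonpos hfa ⟨hu.trans_le ht.1, ht.2⟩)]
  exact neg_le_neg hmono

lemma countable_not_continuousAt_rightD (hf : ConvexOn ℝ (Ioc 0 1) f) :
    {t ∈ Ioo 0 1 | ¬ContinuousAt (rightD f) t}.Countable := by
  refine hf.monotoneOn_rightD_Ioo.countable_not_continuousWithinAt.mono ?_
  rintro t ⟨ht, hdisc⟩
  exact ⟨ht, fun hcont => hdisc (hcont.continuousAt (isOpen_Ioo.mem_nhds ht))⟩

end ConvexOn

lemma ConvexOn.continuousOn_Ioc_of_antitoneOn {f : ℝ → ℝ} {y z : ℝ}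
    (hf : ConvexOn ℝ (Ioc y z) f) (hfa : AntitoneOn f (Ioc y z)) :
    ContinuousOn f (Ioc y z) := by
  rcases le_or_gt z y with hzy | hyz
  · simp [Ioc_eq_empty_of_le hzy]
  refine hf.continuousOn_Ioc ?_
  obtain ⟨m, hym, hmz⟩ := exists_between hyz
  have hz : z ∈ Ioc y z := ⟨hyz, le_rfl⟩
  have hm : m ∈ Ioc y z := ⟨hym, hmz.le⟩
  have hupper : ∀ w ∈ Ioc m z, f w ≤ f z + (z - w) * -slope f z m := by
    intro w hw
    rcases hw.2.eq_or_lt with rfl | hwz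
    · simp
    have hslope : slope f z m ≤ slope f z w :=
      hf.slope_mono hz ⟨hm, hmz.ne⟩ ⟨⟨hym.trans hw.1, hw.2⟩, hwz.ne⟩ hw.1.le
    have hsub : f w - f z = (w - z) * slope f z w := (sub_smul_slope f z w).symm
    nlinarith
  have hlower : ∀ w ∈ Ioc m z, f z ≤ f w := fun w hw => hfa ⟨hym.trans hw.1, hw.2⟩ hz hw.2
  have hchord : Tendsto (fun w => f z + (z - w) * -slope f z m) (𝓝[≤] z) (𝓝 (f z)) := by
    have : Continuous (fun w => f z + (z - w) * -slope f z m) := by fun_prop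
    simpa using (this.tendsto z).mono_left nhdsWithin_le_nhds
  exact tendsto_of_tendsto_of_tendsto_of_le_of_le' tendsto_const_nhds hchord
    (eventually_of_mem (Ioc_mem_nhdsLE hmz) hlower) (eventually_of_mem (Ioc_mem_nhdsLE hmz) hupper)

lemma ConvexOn.integral_Ioc_rightD {f : ℝ → ℝ} (hf : ConvexOn ℝ (Ioc 0 1) f)
    (hfa : AntitoneOn f (Ioc 0 1)) {x : ℝ} (hx : x ∈ Ioc 0 1) :
    ∫ t in Ioc x 1, rightD f t = f 1 - f x := by
  have hsub : Icc x 1 ⊆ Ioc 0 1 := Icc_subset_Ioc hx.1 le_rfl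
  have hint : IntervalIntegrable (rightD f) volume x 1 := by
    refine MonotoneOn.intervalIntegrable ?_
    rw [uIcc_of_le hx.2]
    exact (hf.monotoneOn_rightD hfa).mono hsub
  rw [← intervalIntegral.integral_of_le hx.2]
  exact intervalIntegral.integral_eq_sub_of_hasDeriv_right_of_le hx.2
    ((hf.continuousOn_Ioc_of_antitoneOn hfa).mono hsub)
    (fun t ht => hf.hasDerivWithinAt_rightD ⟨hx.1.trans ht.1, ht.2⟩) hint

theorem tendsto_sub_of_tendsto_rightD {F : ℕ → ℝ → ℝ} {f : ℝ → ℝ}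
    (hF : ∀ n, ConvexOn ℝ (Ioc 0 1) (F n)) (hFa : ∀ n, AntitoneOn (F n) (Ioc 0 1))
    (hf : ConvexOn ℝ (Ioc 0 1) f) (hfa : AntitoneOn f (Ioc 0 1))
    (hlim : ∀ t ∈ Ioo 0 1, ContinuousAt (rightD f) t →
      Tendsto (fun n => rightD (F n) t) atTop (𝓝 (rightD f t)))
    {x : ℝ} (hx : x ∈ Ioc 0 1) :
    Tendsto (fun n => F n 1 - F n x) atTop (𝓝 (f 1 - f x)) := by
  simp only [← (hF _).integral_Ioc_rightD (hFa _) hx, ← hf.integral_Ioc_rightD hfa hx]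
  set D := {t ∈ Ioo 0 1 | ¬ContinuousAt (rightD f) t}
  have hD : D.Countable := hf.countable_not_continuousAt_rightD
  obtain ⟨u, huD, hux⟩ : ∃ u ∈ Dᶜ, u ∈ Ioo 0 x :=
    (hD.dense_compl ℝ).exists_mem_open isOpen_Ioo (nonempty_Ioo.2 hx.1)
  have hu : u ∈ Ioo 0 1 := ⟨hux.1, hux.2.trans_le hx.2⟩
  have hbound : ∀ᶠ n in atTop, ∀ᵐ t ∂volume.restrict (Ioc x 1),
      ‖rightD (F n) t‖ ≤ 1 - rightD f u := by
    have hconv := hlim u hu (by_contra fun hdisc => huD ⟨hu, hdisc⟩)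
    filter_upwards [hconv.eventually (eventually_gt_nhds (sub_one_lt (rightD f u)))] with n hn
    filter_upwards [ae_restrict_mem measurableSet_Ioc] with t ht
    have := (hF n).abs_rightD_le (hFa n) hux.1 ⟨hux.2.le.trans ht.1.le, ht.2⟩
    rw [Real.norm_eq_abs]
    linarith
  have hae : ∀ᵐ t ∂volume.restrict (Ioc x 1),
      Tendsto (fun n => rightD (F n) t) atTop (𝓝 (rightD f t)) := by
    filter_upwards [ae_restrict_mem measurableSet_Ioc,
      ae_restrict_of_ae ((hD.insert 1).ae_notMem volume)] with t ht htD
    have ht1 : t ∈ Ioo 0 1 := ⟨hx.1.trans ht.1, ht.2.lt_of_ne fun h => htD (.inl h)⟩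
    exact hlim t ht1 (by_contra fun hdisc => htD (.inr ⟨ht1, hdisc⟩))
  have hmeas : ∀ n, AEStronglyMeasurable (rightD (F n)) (volume.restrict (Ioc x 1)) := fun n =>
    have hmono := ((hF n).monotoneOn_rightD (hFa n)).mono (Ioc_subset_Ioc_left hx.1.le)
    (aemeasurable_restrict_of_monotoneOn measurableSet_Ioc hmono).aestronglyMeasurable
  exact tendsto_integral_filter_of_dominated_convergence _ (Eventually.of_forall hmeas) hbound
    (integrableOn_const measure_Ioc_lt_top.ne) hae

namespace IsGenerator

variable {ψ : ℝ → ℝ≥0∞}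

lemma convexOn_toReal (hψ : IsGenerator ψ) : ConvexOn ℝ (Ioc 0 1) (fun t => (ψ t).toReal) := by
  refine ⟨convex_Ioc 0 1, fun x hx y hy a b ha hb hab => ?_⟩
  obtain rfl : b = 1 - a := by linarith
  have hxa : ENNReal.ofReal a * ψ x ≠ ⊤ :=
    ENNReal.mul_ne_top ENNReal.ofReal_ne_top (hψ.finite x hx).ne
  have hyb : ENNReal.ofReal (1 - a) * ψ y ≠ ⊤ :=
    ENNReal.mul_ne_top ENNReal.ofReal_ne_top (hψ.finite y hy).ne
  have := ENNReal.toReal_mono (ENNReal.add_ne_top.2 ⟨hxa, hyb⟩)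
    (hψ.convex x (Ioc_subset_Icc_self hx) y (Ioc_subset_Icc_self hy) a ⟨ha, by linarith⟩)
  simpa [ENNReal.toReal_add hxa hyb, ENNReal.toReal_ofReal ha, ENNReal.toReal_ofReal hb] using this

lemma antitoneOn_toReal (hψ : IsGenerator ψ) : AntitoneOn (fun t => (ψ t).toReal) (Ioc 0 1) := by
  intro x hx y hy hxy
  rcases hxy.eq_or_lt with rfl | hlt
  · exact le_rfl
  · exact ENNReal.toReal_mono (hψ.finite x hx).ne
      (hψ.strict_anti x (Ioc_subset_Icc_self hx) y (Ioc_subset_Icc_self hy) hlt).le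

end IsGenerator

/-- If the right-hand derivatives `D⁺φ_n` converge to `D⁺φ` at all
continuity points of `D⁺φ`, then the generators `φ_n` converge to `φ` on `(0,1]`. -/
theorem stmt3 (φ : ℝ → ℝ≥0∞) (φseq : ℕ → ℝ → ℝ≥0∞)
    (hφ : IsGenerator φ) (hφseq : ∀ n, IsGenerator (φseq n))
    (h : ∀ x ∈ ContD φ,
      Filter.Tendsto (fun n => Dplus (φseq n) x) Filter.atTop (nhds (Dplus φ x))) :
    ∀ x ∈ Set.Ioc (0:ℝ) 1,
      Filter.Tendsto (fun n => φseq n x) Filter.atTop (nhds (φ x)) := by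
  intro x hx
  have hdiff := tendsto_sub_of_tendsto_rightD (fun n => (hφseq n).convexOn_toReal)
    (fun n => (hφseq n).antitoneOn_toReal) hφ.convexOn_toReal hφ.antitoneOn_toReal
    (fun t ht hcont => h t ⟨ht, hcont⟩) hx
  simp only [hφ.map_one, (hφseq _).map_one, ENNReal.toReal_zero, zero_sub] at hdiff
  rw [← ENNReal.tendsto_toReal_iff (fun n => ((hφseq n).finite x hx).ne) (hφ.finite x hx).ne]
  simpa using hdiff.neg
end
end

section
/- Let C, C₁, C₂, … be non-strict Archimedean copulas with (normalized, right-continuous at 0) generators φ, φ₁, φ₂, …. If (φ_n) converges pointwise to φ on (0,1], then for every t ∈ [0,1) and every x ∈ [t,1] one has f^t(x) ≥ limsup_{n→∞} f_n^t(x), where f^t and f_n^t denote the t-level functions of C and C_n, respectively. -/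
/-!
Since `φ` is antitone, `f^t(x) ≤ z` as soon as `φ z + φ x < φ t`, and conversely `f^t(x) < z`
forces this strict inequality. A strict inequality between finitely many values of `φ` survives
pointwise convergence, so `f_n^t(x) ≤ z` for all large `n`. At `t = 0` the values `φ_n 0` need
not converge to `φ 0`; right-continuity of `φ` at `0` lets us replace `0` by a small `s > 0`
with `φ z + φ x < φ s`, and `φ_n s ≤ φ_n 0`.
-/

open MeasureTheory Filter Set
open scoped ENNReal

noncomputable section

section PseudoInv

variable {φ : ℝ → ℝ≥0∞} {s : ℝ≥0∞} {t x z : ℝ}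

lemma pseudoInv_nonneg (φ : ℝ → ℝ≥0∞) (s : ℝ≥0∞) : 0 ≤ pseudoInv φ s :=
  Real.sSup_nonneg fun _ hw => hw.1.1

lemma pseudoInv_le_one (φ : ℝ → ℝ≥0∞) (s : ℝ≥0∞) : pseudoInv φ s ≤ 1 :=
  Real.sSup_le (fun _ hw => hw.1.2) zero_le_one

lemma le_pseudoInv (hz : z ∈ Icc (0 : ℝ) 1) (h : s ≤ φ z) : z ≤ pseudoInv φ s :=
  le_csSup ⟨1, fun _ hw => hw.1.2⟩ ⟨hz, h⟩

lemma pseudoInv_le (hφ : AntitoneOn φ (Icc 0 1)) (hz : z ∈ Icc (0 : ℝ) 1) (h : φ z < s) :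
    pseudoInv φ s ≤ z :=
  Real.sSup_le (fun _ hw => not_lt.1 fun hzw => (h.trans_le hw.2).not_ge (hφ hz hw.1 hzw.le))
    hz.1

lemma levelFn_self (φ : ℝ → ℝ≥0∞) (t : ℝ) : levelFn φ t t = 1 :=
  (pseudoInv_le_one _ _).antisymm (le_pseudoInv ⟨zero_le_one, le_rfl⟩ (by simp))

lemma levelFn_le (hφ : AntitoneOn φ (Icc 0 1)) (hx : φ x ≠ ⊤) (hz : z ∈ Icc (0 : ℝ) 1)
    (h : φ z + φ x < φ t) : levelFn φ t x ≤ z :=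
  pseudoInv_le hφ hz ((ENNReal.cancel_of_ne hx).lt_tsub_iff_right.2 h)

lemma add_lt_of_levelFn_lt (hx : φ x ≠ ⊤) (hz : z ∈ Icc (0 : ℝ) 1)
    (h : levelFn φ t x < z) : φ z + φ x < φ t :=
  (ENNReal.cancel_of_ne hx).lt_tsub_iff_right.1 <|
    not_le.1 fun hle => (le_pseudoInv hz hle).not_gt h

end PseudoInv

namespace IsGenerator

variable {φ : ℝ → ℝ≥0∞}

lemma antitoneOn (hφ : IsGenerator φ) : AntitoneOn φ (Icc 0 1) :=
  StrictAntiOn.antitoneOn fun x hx y hy hxy => hφ.strict_anti x hx y hy hxy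

lemma exists_ge_lt_apply (hφ : IsGenerator φ) {t : ℝ} {c : ℝ≥0∞}
    (ht : t ∈ Icc (0 : ℝ) 1) (hc : c < φ t) :
    ∃ s ∈ Ioc (0 : ℝ) 1, t ≤ s ∧ c < φ s := by
  rcases ht.1.eq_or_lt with rfl | htpos
  · have hlt : ∀ᶠ s in nhdsWithin (0 : ℝ) (Ioi 0), c < φ s :=
      hφ.rightCont_zero.eventually (eventually_gt_nhds hc)
    have hmem : ∀ᶠ s in nhdsWithin (0 : ℝ) (Ioi 0), s ∈ Ioc (0 : ℝ) 1 :=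
      Ioc_mem_nhdsGT zero_lt_one
    obtain ⟨s, hs, hcs⟩ := (hmem.and hlt).exists
    exact ⟨s, hs, hs.1.le, hcs⟩
  · exact ⟨t, ⟨htpos, ht.2⟩, le_rfl, hc⟩

end IsGenerator

lemma eventually_levelFn_le {φ : ℝ → ℝ≥0∞} {φseq : ℕ → ℝ → ℝ≥0∞}
    (hφ : IsGenerator φ) (hφseq : ∀ n, IsGenerator (φseq n))
    (hconv : ∀ x ∈ Ioc (0 : ℝ) 1, Tendsto (fun n => φseq n x) atTop (nhds (φ x)))
    {t x z : ℝ} (ht : t ∈ Icc (0 : ℝ) 1) (hx : x ∈ Icc t 1) (hz : z ≤ 1)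
    (hlt : levelFn φ t x < z) : ∀ᶠ n in atTop, levelFn (φseq n) t x ≤ z := by
  have hz' : z ∈ Ioc (0 : ℝ) 1 := ⟨(pseudoInv_nonneg _ _).trans_lt hlt, hz⟩
  have htx : t < x := hx.1.lt_of_ne <| by
    rintro rfl
    exact (levelFn_self φ t ▸ hlt).not_ge hz
  have hx' : x ∈ Ioc (0 : ℝ) 1 := ⟨ht.1.trans_lt htx, hx.2⟩
  obtain ⟨s, hs, hts, hsum⟩ := hφ.exists_ge_lt_apply ht
    (add_lt_of_levelFn_lt (hφ.finite x hx').ne (Ioc_subset_Icc_self hz') hlt)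
  filter_upwards [((hconv z hz').add (hconv x hx')).eventually_lt (hconv s hs) hsum]
    with n hn
  exact levelFn_le (hφseq n).antitoneOn ((hφseq n).finite x hx').ne (Ioc_subset_Icc_self hz')
    (hn.trans_le ((hφseq n).antitoneOn ht (Ioc_subset_Icc_self hs) hts))

theorem stmt5_general (φ : ℝ → ℝ≥0∞) (φseq : ℕ → ℝ → ℝ≥0∞)
    (hφ : IsGenerator φ) (hφseq : ∀ n, IsGenerator (φseq n))
    (hconv : ∀ x ∈ Set.Ioc (0:ℝ) 1,
      Filter.Tendsto (fun n => φseq n x) Filter.atTop (nhds (φ x))) :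
    ∀ t ∈ Set.Ico (0:ℝ) 1, ∀ x ∈ Set.Icc t 1,
      Filter.limsup (fun n => levelFn (φseq n) t x) Filter.atTop ≤ levelFn φ t x := by
  intro t ht x hx
  have hcobdd : IsCoboundedUnder (· ≤ ·) atTop fun n => levelFn (φseq n) t x :=
    isCoboundedUnder_le_of_le atTop fun n => pseudoInv_nonneg _ _
  have hbdd : IsBoundedUnder (· ≤ ·) atTop fun n => levelFn (φseq n) t x :=
    isBoundedUnder_of ⟨1, fun n => pseudoInv_le_one _ _⟩
  refine (limsup_le_iff' hcobdd hbdd).2 fun z hz => ?_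
  rcases le_or_gt z 1 with hz1 | hz1
  · exact eventually_levelFn_le hφ hφseq hconv (Ico_subset_Icc_self ht) hx hz1 hz
  · exact Eventually.of_forall fun n => (pseudoInv_le_one _ _).trans hz1.le

/-- For non-strict Archimedean copulas, pointwise convergence of the
generators on `(0,1]` implies `f^t(x) ≥ limsup_n f_n^t(x)` for every `t ∈ [0,1)` and every
`x ∈ [t,1]`, where `f^t, f_n^t` are the `t`-level functions. -/
theorem stmt5 (φ : ℝ → ℝ≥0∞) (φseq : ℕ → ℝ → ℝ≥0∞)
    (hφ : IsGenerator φ) (hφseq : ∀ n, IsGenerator (φseq n))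
    (hns : φ 0 < ⊤) (hnsseq : ∀ n, φseq n 0 < ⊤)
    (hconv : ∀ x ∈ Set.Ioc (0:ℝ) 1,
      Filter.Tendsto (fun n => φseq n x) Filter.atTop (nhds (φ x))) :
    ∀ t ∈ Set.Ico (0:ℝ) 1, ∀ x ∈ Set.Icc t 1,
      Filter.limsup (fun n => levelFn (φseq n) t x) Filter.atTop ≤ levelFn φ t x :=
  stmt5_general φ φseq hφ hφseq hconv
end
end
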